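/- arXiv:2206.01890 — 2 statements merged into one kernel-verified Lean document; each statement's English description precedes it below -/
import Mathlib

section
/- For any A > 0 and β ∈ ℝ, the initial value problem F'' / (1 + (F')²/A⁴) + F'/ζ = β on (0, ∞), with F(0) = F'(0) = 0 and F extended continuously to 0, has at most one C² solution on any interval [0, R]. -/
/-!
Write `u = F'` and `g(v) = A² arctan (v / A²)`, so that `g' = 1 / (1 + v² / A⁴)` and the equation
reads `(g ∘ u)' = β - u / ζ`. As `u'` is bounded on `[0, R]`, the equation bounds `u(ζ) / ζ`, which
forces `u(0) = 0`. For two solutions,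
`((g ∘ u₁ - g ∘ u₂)²)' = -2 (g(u₁) - g(u₂)) (u₁ - u₂) / ζ ≤ 0` because `g` is increasing, so this
square, which vanishes at `0`, vanishes on `[0, R]`. Hence `u₁ = u₂`, and `F₁ = F₂` since both
vanish at `0`.
-/

/-- `F` is a C² solution on `[0, R]` of the bowl-soliton ODE
`F''/(1 + (F')²/A⁴) + F'/ζ = β` with `F(0) = F'(0) = 0`. -/
def IsBowlSolution (A β R : ℝ) (F : ℝ → ℝ) : Prop :=
  ContDiffOn ℝ 2 F (Set.Icc 0 R) ∧ F 0 = 0 ∧ deriv F 0 = 0 ∧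
    ∀ ζ ∈ Set.Ioc (0 : ℝ) R,
      deriv (deriv F) ζ / (1 + (deriv F ζ) ^ 2 / A ^ 4) + deriv F ζ / ζ = β

open Set Filter Topology Real

noncomputable def arctanPrimitive (A v : ℝ) : ℝ := A ^ 2 * arctan (v / A ^ 2)

lemma hasDerivAt_arctanPrimitive {A : ℝ} (hA : A ≠ 0) (v : ℝ) :
    HasDerivAt (arctanPrimitive A) (1 + v ^ 2 / A ^ 4)⁻¹ v := by
  refine ((((hasDerivAt_id v).div_const (A ^ 2)).arctan).const_mul (A ^ 2)).congr_deriv ?_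
  simp only [id]
  field_simp

lemma arctanPrimitive_strictMono {A : ℝ} (hA : A ≠ 0) : StrictMono (arctanPrimitive A) :=
  fun _ _ hab => mul_lt_mul_of_pos_left
    (arctan_strictMono (div_lt_div_of_pos_right hab (by positivity))) (by positivity)

lemma Monotone.sub_mul_sub_nonneg {α : Type*} [Ring α] [LinearOrder α] [IsOrderedRing α]
    {g : α → α} (hg : Monotone g) (a b : α) : 0 ≤ (g a - g b) * (a - b) := by
  rcases le_total a b with hab | hab
  · exact mul_nonneg_of_nonpos_of_nonpos (sub_nonpos.2 (hg hab)) (sub_nonpos.2 hab)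
  · exact mul_nonneg (sub_nonneg.2 (hg hab)) (sub_nonneg.2 hab)

lemma eq_zero_of_abs_le_mul_nhdsGT {u : ℝ → ℝ} {C : ℝ} (hu : ContinuousWithinAt u (Ioi 0) 0)
    (hC : ∀ᶠ x in 𝓝[>] 0, |u x| ≤ C * x) : u 0 = 0 := by
  have hlim : Tendsto (fun x => C * x) (𝓝[>] 0) (𝓝 0) := by
    simpa using ((continuous_const_mul C).tendsto 0).mono_left nhdsWithin_le_nhds
  exact abs_nonpos_iff.mp (le_of_tendsto_of_tendsto hu.abs hlim hC)

lemma eqOn_Icc_of_derivWithin_eq {f g : ℝ → ℝ} {a b : ℝ} (hf : DifferentiableOn ℝ f (Icc a b))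
    (hg : DifferentiableOn ℝ g (Icc a b))
    (hfg : EqOn (derivWithin f (Icc a b)) (derivWithin g (Icc a b)) (Ico a b)) (ha : f a = g a) :
    EqOn f g (Icc a b) := by
  intro x hx
  have := constant_of_derivWithin_zero (hf.sub hg) (fun y hy => by
    rw [derivWithin_sub (hf y (Ico_subset_Icc_self hy)) (hg y (Ico_subset_Icc_self hy)), hfg hy,
      sub_self]) x hx
  rwa [Pi.sub_apply, Pi.sub_apply, ha, sub_self, sub_eq_zero] at this

def IsBowlSlope (A β R : ℝ) (u : ℝ → ℝ) : Prop :=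
  ContDiffOn ℝ 1 u (Icc 0 R) ∧ ∀ x ∈ Ioo 0 R, deriv u x / (1 + u x ^ 2 / A ^ 4) + u x / x = β

variable {A β R : ℝ}

lemma IsBowlSolution.isBowlSlope {F : ℝ → ℝ} (h : IsBowlSolution A β R F) (hR : 0 < R) :
    IsBowlSlope A β R (derivWithin F (Icc 0 R)) := by
  obtain ⟨hF, -, -, hode⟩ := h
  refine ⟨((contDiffOn_succ_iff_derivWithin (uniqueDiffOn_Icc hR)).1 hF).2.2, fun x hx => ?_⟩
  have heq : derivWithin F (Icc 0 R) =ᶠ[𝓝 x] deriv F := by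
    filter_upwards [Ioo_mem_nhds hx.1 hx.2] with y hy
    exact derivWithin_of_mem_nhds (Icc_mem_nhds hy.1 hy.2)
  rw [heq.deriv_eq, heq.eq_of_nhds]
  exact hode x (Ioo_subset_Ioc_self hx)

namespace IsBowlSlope

variable {u u₁ u₂ : ℝ → ℝ} {x : ℝ}

lemma hasDerivAt (h : IsBowlSlope A β R u) (hx : x ∈ Ioo 0 R) : HasDerivAt u (deriv u x) x :=
  ((h.1.contDiffAt (Icc_mem_nhds hx.1 hx.2)).differentiableAt one_ne_zero).hasDerivAt

lemma hasDerivAt_arctanPrimitive_comp (h : IsBowlSlope A β R u) (hA : A ≠ 0)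
    (hx : x ∈ Ioo 0 R) : HasDerivAt (fun t => arctanPrimitive A (u t)) (β - u x / x) x := by
  refine ((hasDerivAt_arctanPrimitive hA (u x)).comp x (h.hasDerivAt hx)).congr_deriv ?_
  rw [← h.2 x hx, add_sub_cancel_right, inv_mul_eq_div]

lemma apply_zero (h : IsBowlSlope A β R u) (hR : 0 < R) : u 0 = 0 := by
  obtain ⟨M, hM⟩ := isCompact_Icc.exists_bound_of_continuousOn
    (h.1.continuousOn_derivWithin (uniqueDiffOn_Icc hR) le_rfl)
  refine eq_zero_of_abs_le_mul_nhdsGT (C := |β| + M)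
    ((h.1.continuousOn 0 (left_mem_Icc.2 hR.le)).mono_of_mem_nhdsWithin (Icc_mem_nhdsGT hR)) ?_
  filter_upwards [Ioo_mem_nhdsGT hR] with x hx
  have hux : u x / x = β - deriv u x / (1 + u x ^ 2 / A ^ 4) := eq_sub_of_add_eq' (h.2 x hx)
  have hder : |deriv u x| ≤ M := by
    rw [← derivWithin_of_mem_nhds (Icc_mem_nhds hx.1 hx.2)]
    exact hM x (Ioo_subset_Icc_self hx)
  have hfrac : |deriv u x / (1 + u x ^ 2 / A ^ 4)| ≤ |deriv u x| := by
    have hD : 0 < 1 + u x ^ 2 / A ^ 4 := by positivity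
    rw [abs_div, abs_of_pos hD]
    exact div_le_self (abs_nonneg _) (le_add_of_nonneg_right (by positivity))
  calc |u x| = |u x / x| * x := by rw [abs_div, abs_of_pos hx.1, div_mul_cancel₀ _ hx.1.ne']
    _ ≤ (|β| + M) * x := by
      refine mul_le_mul_of_nonneg_right ?_ hx.1.le
      rw [hux]
      exact (abs_sub _ _).trans (by linarith)

lemma eqOn (h₁ : IsBowlSlope A β R u₁) (h₂ : IsBowlSlope A β R u₂) (hA : A ≠ 0)
    (h0 : u₁ 0 = u₂ 0) : EqOn u₁ u₂ (Icc 0 R) := by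
  set g := arctanPrimitive A
  have hg : Continuous g := continuous_iff_continuousAt.2 fun v =>
    (hasDerivAt_arctanPrimitive hA v).continuousAt
  have hanti : AntitoneOn (fun t => (g (u₁ t) - g (u₂ t)) ^ 2) (Icc 0 R) := by
    refine antitoneOn_of_hasDerivWithinAt_nonpos (convex_Icc 0 R)
      (f' := fun x => -(2 * ((g (u₁ x) - g (u₂ x)) * (u₁ x - u₂ x)) / x)) ?_ ?_ ?_
    · exact ((hg.comp_continuousOn h₁.1.continuousOn).sub
        (hg.comp_continuousOn h₂.1.continuousOn)).pow 2
    · rw [interior_Icc]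
      intro x hx
      refine (((h₁.hasDerivAt_arctanPrimitive_comp hA hx).sub
        (h₂.hasDerivAt_arctanPrimitive_comp hA hx)).pow 2).hasDerivWithinAt.congr_deriv ?_
      simp only [Pi.sub_apply, g]
      ring
    · rw [interior_Icc]
      intro x hx
      exact neg_nonpos.2 (div_nonneg (mul_nonneg zero_le_two
        ((arctanPrimitive_strictMono hA).monotone.sub_mul_sub_nonneg _ _)) hx.1.le)
  intro t ht
  have hsq : (g (u₁ t) - g (u₂ t)) ^ 2 = 0 := le_antisymm
    (by simpa [h0] using hanti (left_mem_Icc.2 (ht.1.trans ht.2)) ht ht.1) (sq_nonneg _)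
  exact (arctanPrimitive_strictMono hA).injective
    (sub_eq_zero.1 ((pow_eq_zero_iff two_ne_zero).1 hsq))

end IsBowlSlope

theorem stmt_4 (A β R : ℝ) (hA : 0 < A) (hR : 0 < R) (F₁ F₂ : ℝ → ℝ)
    (h₁ : IsBowlSolution A β R F₁) (h₂ : IsBowlSolution A β R F₂) :
    Set.EqOn F₁ F₂ (Set.Icc 0 R) := by
  have hu₁ := h₁.isBowlSlope hR
  have hu₂ := h₂.isBowlSlope hR
  have hu : EqOn (derivWithin F₁ (Icc 0 R)) (derivWithin F₂ (Icc 0 R)) (Icc 0 R) :=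
    hu₁.eqOn hu₂ hA.ne' ((hu₁.apply_zero hR).trans (hu₂.apply_zero hR).symm)
  exact eqOn_Icc_of_derivWithin_eq (h₁.1.differentiableOn two_ne_zero)
    (h₂.1.differentiableOn two_ne_zero) (hu.mono Ico_subset_Icc_self) (h₁.2.1.trans h₂.2.1.symm)
end

section
/- If F is a C² solution on [0, R] of F''/(1 + (F')²/A⁴) + F'/ζ = β with F(0) = F'(0) = 0, A > 0, and β > 0, then F'(ζ) > 0 for all ζ ∈ (0, R]; in particular F is strictly increasing on [0, R]. -/
/-!
Write `u = F'` and `w = 1 + u² / A⁴ ≥ 1`, so that the equation reads `u' = (β - u / ζ) w`. Then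
`(ζ u)' = u + ζ u' = ζ β w + u (1 - w)` is positive wherever `u ≤ 0`. Hence `ζ u(ζ)`, which
vanishes at `0`, cannot take a negative minimum on `[0, z]`, so `u ≥ 0` on `(0, R)`. At a point
where `u ≤ 0` the equation also gives `u' > 0`, so `u < 0` just to its left, which is impossible.
-/

open Set Filter Topology

lemma eventually_nhdsLT_lt_of_deriv_pos {f : ℝ → ℝ} {x : ℝ} (hf : 0 < deriv f x) :
    ∀ᶠ y in 𝓝[<] x, f y < f x := by
  have hslope :=
    hasDerivAt_iff_tendsto_slope.1 (differentiableAt_of_deriv_ne_zero hf.ne').hasDerivAt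
  filter_upwards [nhdsLT_le_nhdsNE x (hslope.eventually (eventually_gt_nhds hf)),
    self_mem_nhdsWithin] with y hy hyx
  exact (slope_pos_iff_gt hyx).1 hy

lemma le_of_deriv_pos_of_lt {φ : ℝ → ℝ} {a b : ℝ} (hab : a ≤ b) (hφ : ContinuousOn φ (Icc a b))
    (hderiv : ∀ x ∈ Ioc a b, φ x < φ a → 0 < deriv φ x) : φ a ≤ φ b := by
  obtain ⟨c, hc, hmin⟩ := isCompact_Icc.exists_isMinOn (nonempty_Icc.2 hab) hφ
  by_contra! hba
  have hca : φ c < φ a := (hmin (right_mem_Icc.2 hab)).trans_lt hba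
  have hac : a < c := hc.1.lt_of_ne (by rintro rfl; exact hca.false)
  obtain ⟨y, hyc, hy⟩ :=
    ((eventually_nhdsLT_lt_of_deriv_pos (hderiv c ⟨hac, hc.2⟩ hca)).and (Ioo_mem_nhdsLT hac)).exists
  exact hyc.not_ge (hmin ⟨hy.1.le, hy.2.le.trans hc.2⟩)

lemma add_mul_pos_of_div_add_div_eq {β ζ u u' w : ℝ} (hβ : 0 < β) (hζ : 0 < ζ) (hw : 1 ≤ w)
    (hu : u ≤ 0) (h : u' / w + u / ζ = β) : 0 < u + ζ * u' := by
  have hu' : ζ * u' = (ζ * β - u) * w := by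
    rw [← h]
    field_simp
    ring
  rw [hu']
  nlinarith [mul_pos (mul_pos hζ hβ) (zero_lt_one.trans_le hw)]

lemma deriv_nonneg_of_ode {β R z : ℝ} {F w : ℝ → ℝ} (hβ : 0 < β) (hw : ∀ x, 1 ≤ w x)
    (hF : ContDiffOn ℝ 2 F (Icc 0 R))
    (hode : ∀ x ∈ Ioo 0 R, deriv (deriv F) x / w x + deriv F x / x = β) (hz : z ∈ Ioo 0 R) :
    0 ≤ deriv F z := by
  -- `deriv F 0` is the two-sided derivative; the one-sided one is what is continuous up to `0`.
  set g := derivWithin F (Icc 0 R)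
  have hg : ContinuousOn g (Icc 0 R) :=
    hF.continuousOn_derivWithin (uniqueDiffOn_Icc (hz.1.trans hz.2)) (by norm_num)
  have hgF : ∀ x ∈ Ioo 0 R, g =ᶠ[𝓝 x] deriv F := fun x hx =>
    eventually_of_mem (Ioo_mem_nhds hx.1 hx.2) fun y hy =>
      derivWithin_of_mem_nhds (Icc_mem_nhds hy.1 hy.2)
  have hF' : DifferentiableOn ℝ (deriv F) (Ioo 0 R) :=
    ((hF.mono Ioo_subset_Icc_self).deriv_of_isOpen (m := 1) isOpen_Ioo (by norm_num)
      ).differentiableOn one_ne_zero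
  set φ : ℝ → ℝ := fun y => y * g y
  have hφ : ContinuousOn φ (Icc 0 z) :=
    continuousOn_id.mul (hg.mono (Icc_subset_Icc_right hz.2.le))
  have hmin : φ 0 ≤ φ z := le_of_deriv_pos_of_lt hz.1.le hφ fun x hx hneg => by
    have hxR : x ∈ Ioo 0 R := ⟨hx.1, hx.2.trans_lt hz.2⟩
    have hderiv : HasDerivAt φ (1 * deriv F x + x * deriv (deriv F) x) x :=
      ((hasDerivAt_id' x).mul (hF'.differentiableAt (Ioo_mem_nhds hxR.1 hxR.2)).hasDerivAt
        ).congr_of_eventuallyEq ((hgF x hxR).mono fun y hy => congrArg (y * ·) hy)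
    rw [hderiv.deriv, one_mul]
    refine add_mul_pos_of_div_add_div_eq hβ hx.1 (hw x) ?_ (hode x hxR)
    rw [← (hgF x hxR).eq_of_nhds]
    simp only [φ, zero_mul] at hneg
    exact (neg_of_mul_neg_right hneg hx.1.le).le
  rw [← (hgF z hz).eq_of_nhds]
  simp only [φ, zero_mul] at hmin
  exact nonneg_of_mul_nonneg_right hmin hz.1

lemma deriv_pos_of_ode {β R : ℝ} {F w : ℝ → ℝ} (hβ : 0 < β) (hw : ∀ x, 1 ≤ w x)
    (hF : ContDiffOn ℝ 2 F (Icc 0 R))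
    (hode : ∀ x ∈ Ioc 0 R, deriv (deriv F) x / w x + deriv F x / x = β) :
    ∀ ζ ∈ Ioc 0 R, 0 < deriv F ζ := by
  intro ζ hζ
  by_contra! hle
  have hF'' : 0 < deriv (deriv F) ζ := by
    have hζu := add_mul_pos_of_div_add_div_eq hβ hζ.1 (hw ζ) hle (hode ζ hζ)
    exact pos_of_mul_pos_right (by linarith) hζ.1.le
  obtain ⟨y, hyζ, hy⟩ :=
    ((eventually_nhdsLT_lt_of_deriv_pos hF'').and (Ioo_mem_nhdsLT hζ.1)).exists
  have hy0 : 0 ≤ deriv F y := deriv_nonneg_of_ode hβ hw hF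
    (fun x hx => hode x (Ioo_subset_Ioc_self hx)) ⟨hy.1, hy.2.trans_le hζ.2⟩
  linarith

theorem stmt_5_general (A β R : ℝ) (hβ : 0 < β) (F : ℝ → ℝ)
    (hF : ContDiffOn ℝ 2 F (Set.Icc 0 R))
    (hode : ∀ ζ ∈ Set.Ioc (0 : ℝ) R,
      deriv (deriv F) ζ / (1 + (deriv F ζ) ^ 2 / A ^ 4) + deriv F ζ / ζ = β) :
    (∀ ζ ∈ Set.Ioc (0 : ℝ) R, 0 < deriv F ζ) ∧ StrictMonoOn F (Set.Icc 0 R) := by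
  have hpos := deriv_pos_of_ode hβ (fun ζ => le_add_of_nonneg_right (by positivity)) hF hode
  refine ⟨hpos, strictMonoOn_of_deriv_pos (convex_Icc 0 R) hF.continuousOn fun x hx => ?_⟩
  rw [interior_Icc] at hx
  exact hpos x (Ioo_subset_Ioc_self hx)

theorem stmt_5 (A β R : ℝ) (hA : 0 < A) (hβ : 0 < β) (hR : 0 < R) (F : ℝ → ℝ)
    (hF : ContDiffOn ℝ 2 F (Set.Icc 0 R)) (hF0 : F 0 = 0) (hF'0 : deriv F 0 = 0)
    (hode : ∀ ζ ∈ Set.Ioc (0 : ℝ) R,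
      deriv (deriv F) ζ / (1 + (deriv F ζ) ^ 2 / A ^ 4) + deriv F ζ / ζ = β) :
    (∀ ζ ∈ Set.Ioc (0 : ℝ) R, 0 < deriv F ζ) ∧ StrictMonoOn F (Set.Icc 0 R) :=
  stmt_5_general A β R hβ F hF hode
end
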